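/- Let n = 2p+2 with p ≥ 1 and let A = diag(λ₁, −λ₁, …, λ_{p+1}, −λ_{p+1}) be the n×n real diagonal matrix with λ₁ > … > λ_{p+1} > 0 and 2(λ₁² + … + λ_{p+1}²) = 1, viewed as a complex Hermitian matrix. Then the real subspace {X an n×n complex Hermitian matrix : tr X = 0, tr(XA) = 0, and tr(X A^{2α}) = 0 for all 1 ≤ α ≤ p} is exactly the ℝ-linear span of the set {Ê_{ij} : 1 ≤ i < j ≤ n} ∪ {i·(E_{ij} − E_{ji})/√2 : 1 ≤ i < j ≤ n} ∪ {X_α(A) : 1 ≤ α ≤ p}. -/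

import Mathlib

/-!
For `A = diag a` with `a` real, `tr (X A^k)` only sees the real diagonal `d` of a Hermitian
`X`, and the off-diagonal part of `X` is a real combination of the `Ê_ij` and
`i (E_ij - E_ji) / √2`. The `2p + 2` entries `±λ_j` of `a` are distinct, so by Vandermonde the
powers `a^0, …, a^(2p+1)` span `ℝⁿ` and `d = e + o` with `e` a combination of even and `o` of
odd powers. Odd power sums of `a` vanish, so even and odd powers are orthogonal; the conditions
`tr (X A^(2α)) = 0` say `d ⊥ e`, hence `e ⊥ e` and `e = 0`. Finally `tr (X A) = 0` says
`d ⊥ a`, and the orthogonal projection onto `a^⊥` (recall `|a|² = tr A² = 1`) fixes `d`, kills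
`a` and sends `a^(2α+1)` to the diagonal of `X_α(A)`.
-/

open Matrix Submodule

section DotProduct

variable {K : Type*} [Field K] {ι : Type*} [Fintype ι]

theorem dotProduct_eq_zero_of_mem_span {S : Set (ι → K)} {v x : ι → K}
    (hS : ∀ s ∈ S, v ⬝ᵥ s = 0) (hx : x ∈ span K S) : v ⬝ᵥ x = 0 := by
  induction hx using span_induction with
  | mem s hs => exact hS s hs
  | zero => exact dotProduct_zero v
  | add x y _ _ hx hy => rw [dotProduct_add, hx, hy, add_zero]
  | smul c x _ hx => rw [dotProduct_smul, hx, smul_zero]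

theorem pow_dotProduct_pow (a : ι → K) (j k : ℕ) :
    a ^ j ⬝ᵥ a ^ k = ∑ i, a i ^ (j + k) := by
  simp [dotProduct, pow_add]

theorem span_pow_eq_top_of_injective {m : ℕ} {a : Fin m → K} (ha : Function.Injective a) :
    span K (Set.range fun k : Fin m => a ^ (k : ℕ)) = ⊤ := by
  have hV : Function.Surjective (vandermonde a).mulVecLin := mulVec_surjective_iff_isUnit.mpr <|
    (isUnit_iff_isUnit_det _).mpr (det_vandermonde_ne_zero_iff.mpr ha).isUnit
  rw [← LinearMap.range_eq_top.mpr hV, range_mulVecLin]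
  rfl

theorem mem_span_odd_pow_of_dotProduct_even_pow_eq_zero [LinearOrder K] [IsStrictOrderedRing K]
    {m : ℕ} {a : Fin m → K} (ha : Function.Injective a)
    (hodd : ∀ k, Odd k → ∑ i, a i ^ k = 0) {d : Fin m → K}
    (hd : ∀ k, Even k → k < m → d ⬝ᵥ a ^ k = 0) :
    d ∈ span K ((a ^ ·) '' {k | Odd k ∧ k < m}) := by
  set E := span K ((a ^ ·) '' {k | Even k ∧ k < m})
  set O := span K ((a ^ ·) '' {k | Odd k ∧ k < m})
  have hEO : ∀ x ∈ O, ∀ k, Even k → k < m → x ⬝ᵥ a ^ k = 0 := by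
    intro x hx k hk _
    rw [dotProduct_comm]
    refine dotProduct_eq_zero_of_mem_span ?_ hx
    rintro _ ⟨j, ⟨hj, _⟩, rfl⟩
    rw [pow_dotProduct_pow]
    exact hodd _ (hk.add_odd hj)
  have hperp : ∀ x, (∀ k, Even k → k < m → x ⬝ᵥ a ^ k = 0) →
      ∀ e ∈ E, x ⬝ᵥ e = 0 := by
    rintro x hx e he
    refine dotProduct_eq_zero_of_mem_span ?_ he
    rintro _ ⟨k, ⟨hk, hkm⟩, rfl⟩
    exact hx k hk hkm
  have htop : (⊤ : Submodule K (Fin m → K)) ≤ E ⊔ O := by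
    rw [← span_pow_eq_top_of_injective ha, span_le]
    rintro _ ⟨k, rfl⟩
    rcases Nat.even_or_odd k with hk | hk
    · exact mem_sup_left (subset_span ⟨k, ⟨hk, k.isLt⟩, rfl⟩)
    · exact mem_sup_right (subset_span ⟨k, ⟨hk, k.isLt⟩, rfl⟩)
  obtain ⟨e, he, o, ho, rfl⟩ := mem_sup.mp (htop (mem_top (x := d)))
  have hee : e ⬝ᵥ e = 0 := by
    have h := hperp _ hd e he
    rwa [add_dotProduct, hperp o (hEO o ho) e he, add_zero] at h
  rwa [dotProduct_self_eq_zero.mp hee, zero_add]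

theorem sub_smul_mem_span_image_of_mem_span_insert {a d : ι → K} {U : Set (ι → K)}
    (ha : a ⬝ᵥ a = 1) (hd : d ∈ span K (insert a U)) (hda : d ⬝ᵥ a = 0) :
    d ∈ span K ((fun u => u - (u ⬝ᵥ a) • a) '' U) := by
  let P : (ι → K) →ₗ[K] (ι → K) :=
    { toFun := fun u => u - (u ⬝ᵥ a) • a
      map_add' := fun u v => by rw [add_dotProduct]; module
      map_smul' := fun c u => by
        rw [smul_dotProduct, smul_eq_mul, RingHom.id_apply]
        module }
  have hPd : P d = d := by simp [P, hda]
  have hPa : P a = 0 := by simp [P, ha]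
  have hPd_mem := mem_map_of_mem (f := P) hd
  rwa [map_span, Set.image_insert_eq, hPa, span_insert_zero, hPd] at hPd_mem

end DotProduct

section Interleave

def finProdTwoEquiv (p : ℕ) : Fin (p + 1) × Fin 2 ≃ Fin (2 * p + 2) :=
  finProdFinEquiv.trans (finCongr (by ring))

def interleaveNeg {p : ℕ} (lam : Fin (p + 1) → ℝ) (i : Fin (2 * p + 2)) : ℝ :=
  (-1 : ℝ) ^ ((i : ℕ) % 2) * lam ⟨(i : ℕ) / 2, Nat.div_lt_of_lt_mul (by omega)⟩

variable {p : ℕ} (lam : Fin (p + 1) → ℝ)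

theorem interleaveNeg_finProdTwoEquiv (j : Fin (p + 1)) (b : Fin 2) :
    interleaveNeg lam (finProdTwoEquiv p (j, b)) = (-1 : ℝ) ^ (b : ℕ) * lam j := by
  have hval : (finProdTwoEquiv p (j, b) : ℕ) = b + 2 * j := by simp [finProdTwoEquiv]
  have hmod : ((b : ℕ) + 2 * j) % 2 = b := by omega
  have hdiv : ((b : ℕ) + 2 * j) / 2 = j := by omega
  simp only [interleaveNeg, hval, hmod, hdiv]

theorem sum_interleaveNeg {M : Type*} [AddCommMonoid M] (g : ℝ → M) :
    ∑ i, g (interleaveNeg lam i) = ∑ j, (g (lam j) + g (-lam j)) := by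
  rw [← (finProdTwoEquiv p).sum_comp, Fintype.sum_prod_type]
  simp [interleaveNeg_finProdTwoEquiv, Fin.sum_univ_two]

theorem sum_interleaveNeg_pow_of_odd {k : ℕ} (hk : Odd k) :
    ∑ i, interleaveNeg lam i ^ k = 0 := by
  simp [sum_interleaveNeg lam (· ^ k), hk.neg_pow]

theorem interleaveNeg_dotProduct_self :
    interleaveNeg lam ⬝ᵥ interleaveNeg lam = 2 * ∑ j, lam j ^ 2 := by
  simp only [dotProduct, sum_interleaveNeg lam (fun x => x * x), Finset.mul_sum]
  congr 1; ext j; ring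

theorem interleaveNeg_injective (hlam : Function.Injective lam) (hpos : ∀ j, 0 < lam j) :
    Function.Injective (interleaveNeg lam) := by
  intro x y hxy
  obtain ⟨⟨j, b⟩, rfl⟩ := (finProdTwoEquiv p).surjective x
  obtain ⟨⟨j', b'⟩, rfl⟩ := (finProdTwoEquiv p).surjective y
  rw [interleaveNeg_finProdTwoEquiv, interleaveNeg_finProdTwoEquiv] at hxy
  have hj := hpos j
  have hj' := hpos j'
  congr 1
  fin_cases b <;> fin_cases b' <;> simp at hxy ⊢ <;> first | exact hlam hxy | linarith

end Interleave

section RealDiagonal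

variable {ι : Type*}

def reDiag (X : Matrix ι ι ℂ) : ι → ℝ := fun i => (X i i).re

theorem Matrix.IsHermitian.ofReal_reDiag {X : Matrix ι ι ℂ} (hX : X.IsHermitian) (i : ι) :
    ((reDiag X i : ℝ) : ℂ) = X i i :=
  hX.coe_re_apply_self i

variable [DecidableEq ι]

noncomputable def realDiagonal : (ι → ℝ) →ₗ[ℝ] Matrix ι ι ℂ :=
  (diagonalLinearMap ι ℝ ℂ).comp (Complex.ofRealCLM.toLinearMap.compLeft ι)

theorem realDiagonal_apply (d : ι → ℝ) : realDiagonal d = diagonal fun i => (d i : ℂ) := rfl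

theorem isHermitian_realDiagonal (d : ι → ℝ) : (realDiagonal d).IsHermitian :=
  isHermitian_diagonal_iff.mpr fun i => Complex.conj_ofReal (d i)

theorem reDiag_realDiagonal (d : ι → ℝ) : reDiag (realDiagonal d) = d := by
  ext i; simp [reDiag, realDiagonal_apply]

variable [Fintype ι]

theorem realDiagonal_pow (a : ι → ℝ) (k : ℕ) :
    realDiagonal a ^ k = realDiagonal (a ^ k) := by
  simp [realDiagonal_apply, diagonal_pow]

theorem trace_mul_realDiagonal_pow_eq_zero_iff {X : Matrix ι ι ℂ} (hX : X.IsHermitian)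
    (a : ι → ℝ) (k : ℕ) :
    trace (X * realDiagonal a ^ k) = 0 ↔ reDiag X ⬝ᵥ a ^ k = 0 := by
  have htr : trace (X * realDiagonal a ^ k) = ((reDiag X ⬝ᵥ a ^ k : ℝ) : ℂ) := by
    rw [realDiagonal_pow, realDiagonal_apply]
    simp [trace, dotProduct, hX.ofReal_reDiag]
  rw [htr, Complex.ofReal_eq_zero]

theorem realDiagonal_sub_dotProduct_smul (a : ι → ℝ) (k : ℕ) :
    realDiagonal (a ^ k - (a ^ k ⬝ᵥ a) • a) =
      realDiagonal a ^ k - trace (realDiagonal a ^ (k + 1)) • realDiagonal a := by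
  have htr : trace (realDiagonal a ^ (k + 1)) = ((a ^ k ⬝ᵥ a : ℝ) : ℂ) := by
    rw [realDiagonal_pow, realDiagonal_apply]
    simp [trace, dotProduct, pow_succ]
  rw [htr, Complex.coe_smul, map_sub, map_smul, realDiagonal_pow]

end RealDiagonal

section OffDiagonal

variable {ι : Type*} [DecidableEq ι] [LinearOrder ι]

def offDiagSymm : Set (Matrix ι ι ℂ) :=
  {M | ∃ i j : ι, i < j ∧ M = (Real.sqrt 2 : ℂ)⁻¹ • (single i j 1 + single j i 1)}

def offDiagSkew : Set (Matrix ι ι ℂ) :=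
  {M | ∃ i j : ι, i < j ∧
    M = (Real.sqrt 2 : ℂ)⁻¹ • (Complex.I • (single i j 1 - single j i 1))}

theorem smul_single_add_star_smul_single_mem_span {i j : ι} (hij : i < j) (z : ℂ) :
    z • single i j (1 : ℂ) + star z • single j i 1 ∈
      span ℝ (offDiagSymm ∪ offDiagSkew) := by
  have key : z • single i j (1 : ℂ) + star z • single j i 1 =
      (Real.sqrt 2 * z.re) • ((Real.sqrt 2 : ℂ)⁻¹ • (single i j 1 + single j i 1)) +
      (Real.sqrt 2 * z.im) •
        ((Real.sqrt 2 : ℂ)⁻¹ • (Complex.I • (single i j 1 - single j i 1))) := by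
    match_scalars
    all_goals field_simp; apply Complex.ext <;> simp <;> ring
  rw [key]
  exact add_mem (smul_mem _ _ (subset_span (Or.inl ⟨i, j, hij, rfl⟩)))
    (smul_mem _ _ (subset_span (Or.inr ⟨i, j, hij, rfl⟩)))

theorem isHermitian_and_diag_eq_zero_of_mem_offDiag {M : Matrix ι ι ℂ}
    (hM : M ∈ offDiagSymm ∪ offDiagSkew) : M.IsHermitian ∧ ∀ i, M i i = 0 := by
  rcases hM with ⟨i, j, hij, rfl⟩ | ⟨i, j, hij, rfl⟩ <;> refine ⟨?_, fun k => ?_⟩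
  · simp [IsHermitian, conjTranspose_single, add_comm]
  · simp [single_apply]; grind
  · simp [IsHermitian, conjTranspose_single, smul_sub, ← single_neg]; abel
  · simp [single_apply]; grind

variable [Fintype ι]

theorem mem_span_offDiag_of_isHermitian {M : Matrix ι ι ℂ} (hM : M.IsHermitian)
    (hdiag : ∀ i, M i i = 0) : M ∈ span ℝ (offDiagSymm ∪ offDiagSkew) := by
  have hsum : M = ∑ i, ∑ j,
      (1 / 2 : ℝ) • (M i j • single i j 1 + star (M i j) • single j i 1) := by
    ext a b
    simp [Matrix.sum_apply, single_apply, Finset.sum_add_distrib, ite_and, Finset.sum_ite_irrel]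
    rw [← hM.apply a b, Complex.star_def]
    ring
  rw [hsum]
  refine sum_mem fun i _ => sum_mem fun j _ => smul_mem _ _ ?_
  rcases lt_trichotomy i j with h | rfl | h
  · exact smul_single_add_star_smul_single_mem_span h _
  · simp [hdiag]
  · simpa [add_comm] using smul_single_add_star_smul_single_mem_span h (star (M i j))

end OffDiagonal

section Tangent

variable {ι : Type*} [Fintype ι] [DecidableEq ι]

def tangentSubspace (p : ℕ) (A : Matrix ι ι ℂ) : Submodule ℝ (Matrix ι ι ℂ) where
  carrier := {X | Xᴴ = X ∧ trace X = 0 ∧ trace (X * A) = 0 ∧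
    ∀ α, 1 ≤ α → α ≤ p → trace (X * A ^ (2 * α)) = 0}
  add_mem' := by
    rintro X Y ⟨hX, hX0, hX1, hX2⟩ ⟨hY, hY0, hY1, hY2⟩
    refine ⟨by rw [conjTranspose_add, hX, hY], by rw [trace_add, hX0, hY0, add_zero],
      by rw [add_mul, trace_add, hX1, hY1, add_zero], fun α h1 h2 => ?_⟩
    rw [add_mul, trace_add, hX2 α h1 h2, hY2 α h1 h2, add_zero]
  zero_mem' := by simp
  smul_mem' := by
    rintro c X ⟨hX, hX0, hX1, hX2⟩
    refine ⟨by rw [conjTranspose_smul, star_trivial, hX], by rw [trace_smul, hX0, smul_zero],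
      by rw [smul_mul_assoc, trace_smul, hX1, smul_zero], fun α h1 h2 => ?_⟩
    rw [smul_mul_assoc, trace_smul, hX2 α h1 h2, smul_zero]

theorem mem_tangentSubspace_realDiagonal_iff {p : ℕ} {a : ι → ℝ} {X : Matrix ι ι ℂ} :
    X ∈ tangentSubspace p (realDiagonal a) ↔
      X.IsHermitian ∧ ∀ k, k = 1 ∨ Even k ∧ k ≤ 2 * p → reDiag X ⬝ᵥ a ^ k = 0 := by
  refine ⟨fun ⟨hX, h0, h1, h2⟩ => ⟨hX, ?_⟩,
    fun ⟨hX, h⟩ => ⟨hX, ?_, ?_, fun α h1 h2 => ?_⟩⟩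
  all_goals have key := trace_mul_realDiagonal_pow_eq_zero_iff hX a
  · rintro k (rfl | ⟨hk, hkp⟩)
    · exact (key 1).mp (by rwa [pow_one])
    obtain ⟨l, rfl⟩ := hk.two_dvd
    rcases Nat.eq_zero_or_pos l with rfl | hl
    · exact (key 0).mp (by rwa [pow_zero, mul_one])
    · exact (key _).mp (h2 l hl (by omega))
  · simpa using (key 0).mpr (h 0 (Or.inr ⟨Even.zero, Nat.zero_le _⟩))
  · simpa using (key 1).mpr (h 1 (Or.inl rfl))
  · exact (key _).mpr (h (2 * α) (Or.inr ⟨even_two_mul α, by omega⟩))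

def projectedOddPowers (p : ℕ) (A : Matrix ι ι ℂ) : Set (Matrix ι ι ℂ) :=
  {M | ∃ α, 1 ≤ α ∧ α ≤ p ∧ M = A ^ (2 * α + 1) - trace (A ^ (2 * α + 2)) • A}

theorem span_le_tangentSubspace [LinearOrder ι] {p : ℕ} {a : ι → ℝ}
    (hodd : ∀ k, Odd k → ∑ i, a i ^ k = 0) (hnorm : a ⬝ᵥ a = 1) :
    span ℝ (offDiagSymm ∪ offDiagSkew ∪ projectedOddPowers p (realDiagonal a)) ≤
      tangentSubspace p (realDiagonal a) := by
  rw [span_le]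
  rintro M (hM | ⟨α, -, -, rfl⟩)
  · obtain ⟨hH, hdiag⟩ := isHermitian_and_diag_eq_zero_of_mem_offDiag hM
    have hre : reDiag M = 0 := funext fun i => by simp [reDiag, hdiag]
    exact mem_tangentSubspace_realDiagonal_iff.mpr ⟨hH, fun k _ => by rw [hre, zero_dotProduct]⟩
  · rw [← realDiagonal_sub_dotProduct_smul]
    refine mem_tangentSubspace_realDiagonal_iff.mpr ⟨isHermitian_realDiagonal _, ?_⟩
    rintro k (rfl | ⟨hk, -⟩)
    · rw [reDiag_realDiagonal, pow_one, sub_dotProduct, smul_dotProduct, hnorm, smul_eq_mul,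
        mul_one, sub_self]
    · have hak : a ⬝ᵥ a ^ k = ∑ i, a i ^ (1 + k) := by simpa using pow_dotProduct_pow a 1 k
      rw [reDiag_realDiagonal, sub_dotProduct, smul_dotProduct, pow_dotProduct_pow, hak,
        hodd _ ((odd_two_mul_add_one α).add_even hk), hodd _ (odd_one.add_even hk), smul_zero,
        sub_zero]

end Tangent

theorem tangentSubspace_le_span {m p : ℕ} {a : Fin m → ℝ} (hm : m ≤ 2 * p + 2)
    (ha : Function.Injective a) (hodd : ∀ k, Odd k → ∑ i, a i ^ k = 0)
    (hnorm : a ⬝ᵥ a = 1) :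
    tangentSubspace p (realDiagonal a) ≤
      span ℝ (offDiagSymm ∪ offDiagSkew ∪ projectedOddPowers p (realDiagonal a)) := by
  intro X hX
  obtain ⟨hX, hdot⟩ := mem_tangentSubspace_realDiagonal_iff.mp hX
  set d := reDiag X
  have hd_odd : d ∈ span ℝ ((a ^ ·) '' {k | Odd k ∧ k < m}) :=
    mem_span_odd_pow_of_dotProduct_even_pow_eq_zero ha hodd
      fun k hk _ => hdot k (Or.inr ⟨hk, by obtain ⟨l, rfl⟩ := hk; omega⟩)
  have hd : d ∈ span ℝ
      ((fun u => u - (u ⬝ᵥ a) • a) '' ((a ^ ·) '' {k | Odd k ∧ 1 < k ∧ k < m})) := by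
    refine sub_smul_mem_span_image_of_mem_span_insert hnorm (span_mono ?_ hd_odd)
      (by simpa using hdot 1 (Or.inl rfl))
    rintro _ ⟨k, ⟨hk, hkm⟩, rfl⟩
    rcases eq_or_ne k 1 with rfl | hk1
    · exact Or.inl (pow_one a)
    · exact Or.inr ⟨k, ⟨hk, by grind, hkm⟩, rfl⟩
  have hdiag := mem_map_of_mem (f := realDiagonal) hd
  rw [map_span, Set.image_image, Set.image_image] at hdiag
  rw [← sub_add_cancel X (realDiagonal d)]
  refine add_mem (span_mono Set.subset_union_left ?_) (span_mono ?_ hdiag)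
  · refine mem_span_offDiag_of_isHermitian (hX.sub (isHermitian_realDiagonal d)) fun i => ?_
    simp [realDiagonal_apply, d, ← hX.ofReal_reDiag]
  · rintro _ ⟨k, ⟨⟨α, rfl⟩, hk1, hkm⟩, rfl⟩
    exact Or.inr ⟨α, by omega, by omega, realDiagonal_sub_dotProduct_smul a _⟩

/-- real tangent space of `B_{n,ℂ}` at a real diagonal point,
even regular case `n = 2p+2`. -/
theorem tangent_space_complex_even_regular_case (p : ℕ)
    (lam : Fin (p + 1) → ℝ)
    (hanti : StrictAnti lam) (hpos : ∀ i, 0 < lam i)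
    (hsum : 2 * ∑ i, lam i ^ 2 = 1)
    (A : Matrix (Fin (2 * p + 2)) (Fin (2 * p + 2)) ℂ)
    (hA : A = Matrix.diagonal (fun i : Fin (2 * p + 2) =>
      (((-1 : ℝ) ^ ((i : ℕ) % 2) * lam ⟨(i : ℕ) / 2, by omega⟩ : ℝ) : ℂ))) :
    {X : Matrix (Fin (2 * p + 2)) (Fin (2 * p + 2)) ℂ |
        Xᴴ = X ∧ Matrix.trace X = 0 ∧ Matrix.trace (X * A) = 0 ∧
          ∀ α, 1 ≤ α → α ≤ p → Matrix.trace (X * A ^ (2 * α)) = 0} =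
      ↑(Submodule.span ℝ
        ({M | ∃ i j : Fin (2 * p + 2), i < j ∧
            M = (Real.sqrt 2 : ℂ)⁻¹ •
              (Matrix.single i j 1 + Matrix.single j i 1)} ∪
         {M | ∃ i j : Fin (2 * p + 2), i < j ∧
            M = (Real.sqrt 2 : ℂ)⁻¹ • (Complex.I •
              (Matrix.single i j 1 - Matrix.single j i 1))} ∪
         {M | ∃ α, 1 ≤ α ∧ α ≤ p ∧
            M = A ^ (2 * α + 1) - Matrix.trace (A ^ (2 * α + 2)) • A})) := by
  obtain rfl : A = realDiagonal (interleaveNeg lam) := hA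
  have hodd : ∀ k, Odd k → ∑ i, interleaveNeg lam i ^ k = 0 :=
    fun _ => sum_interleaveNeg_pow_of_odd lam
  have hnorm := (interleaveNeg_dotProduct_self lam).trans hsum
  exact congrArg SetLike.coe <| le_antisymm
    (tangentSubspace_le_span le_rfl (interleaveNeg_injective lam hanti.injective hpos) hodd hnorm)
    (span_le_tangentSubspace hodd hnorm)
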